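/- The language L_sep is recognized by a nondeterministic max-automaton. -/

import Mathlib

namespace MaxReg

/-! ### Counter operations and boolean combinations -/

inductive CounterOp (C : Type) where
  | inc (c : C)
  | reset (c : C)
  | output (c : C)
  | maxOp (c d : C)

def applyOp {C : Type} [DecidableEq C] (v : C → ℕ) :
    CounterOp C → (C → ℕ) × Option (C × ℕ)
  | .inc c => (Function.update v c (v c + 1), none)
  | .reset c => (Function.update v c 0, none)
  | .output c => (v, some (c, v c))
  | .maxOp c d => (Function.update v c (max (v c) (v d)), none)

def applyOps {C : Type} [DecidableEq C] :
    List (CounterOp C) → (C → ℕ) → (C → ℕ) × List (C × ℕ)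
  | [], v => (v, [])
  | op :: ops, v =>
      let p := applyOp v op
      let r := applyOps ops p.1
      (r.1, p.2.toList ++ r.2)

/-- Boolean combinations with atoms in `σ` (used for acceptance conditions:
the atom `c` stands for "the sequence of values output on counter `c` is bounded"). -/
inductive BC (σ : Type) where
  | tt
  | atom (a : σ)
  | nt (φ : BC σ)
  | an (φ ψ : BC σ)

def BC.eval {σ : Type} (f : σ → Prop) : BC σ → Prop
  | .tt => True
  | .atom a => f a
  | .nt φ => ¬ φ.eval f
  | .an φ ψ => φ.eval f ∧ ψ.eval f

/-! ### Deterministic max-automata -/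

structure MaxAutomaton (α : Type) where
  Q : Type
  C : Type
  [finQ : Fintype Q]
  [finC : Fintype C]
  [decC : DecidableEq C]
  init : Q
  δ : Q → α → Q × List (CounterOp C)
  acc : BC C

attribute [instance] MaxAutomaton.finQ MaxAutomaton.finC MaxAutomaton.decC

namespace MaxAutomaton

variable {α : Type} (A : MaxAutomaton α)

/-- The state at position `n` of the unique run on `w`, started in state `q`
(at position `0`). -/
def runFrom (q : A.Q) (w : ℕ → α) : ℕ → A.Q
  | 0 => q
  | n + 1 => (A.δ (runFrom q w n) (w n)).1

/-- Counter values before reading the letter at position `n` (all counters start at `0`). -/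
def valsFrom (q : A.Q) (w : ℕ → α) : ℕ → (A.C → ℕ)
  | 0 => fun _ => 0
  | n + 1 => (applyOps (A.δ (A.runFrom q w n) (w n)).2 (valsFrom q w n)).1

/-- The (counter, value) pairs output while reading the letter at position `n`. -/
def outsFrom (q : A.Q) (w : ℕ → α) (n : ℕ) : List (A.C × ℕ) :=
  (applyOps (A.δ (A.runFrom q w n) (w n)).2 (A.valsFrom q w n)).2

/-- "The sequence `ρ_c` of values output on counter `c` is bounded." -/
def BoundedFrom (q : A.Q) (w : ℕ → α) (c : A.C) : Prop :=
  ∃ B, ∀ n, ∀ p ∈ A.outsFrom q w n, p.1 = c → p.2 ≤ B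

def AcceptsFrom (q : A.Q) (w : ℕ → α) : Prop :=
  A.acc.eval (A.BoundedFrom q w)

def Accepts (w : ℕ → α) : Prop := A.AcceptsFrom A.init w

def Lang : Set (ℕ → α) := { w | A.Accepts w }

/-- One step on a configuration (state, counter valuation), for reading finite words. -/
def stepList (p : A.Q × (A.C → ℕ)) (a : α) : A.Q × (A.C → ℕ) :=
  ((A.δ p.1 a).1, (applyOps (A.δ p.1 a).2 p.2).1)

/-- Configuration (state, counter valuation) reached after reading a finite word
from the initial state with all counters `0`. -/
def readConfig (l : List α) : A.Q × (A.C → ℕ) :=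
  l.foldl A.stepList (A.init, fun _ => 0)

end MaxAutomaton

/-! ### Annotating words with sets -/

/-- `w[X]` : extend each letter of `w` with the bit `1` exactly at the positions in `X`. -/
def withSet {α : Type} (w : ℕ → α) (X : Finset ℕ) : ℕ → α × Bool :=
  fun n => (w n, decide (n ∈ X))

/-- `w[X₁,…,Xₙ]` : extend each letter of `w` with a bit vector. -/
def withSets {α : Type} {n : ℕ} (w : ℕ → α) (Xs : Fin n → Finset ℕ) :
    ℕ → α × (Fin n → Bool) :=
  fun m => (w m, fun i => decide (m ∈ Xs i))

/-- Annotate a finite word with a set of positions. -/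
def encodeList {α : Type} (l : List α) (X : Finset ℕ) : List (α × Bool) :=
  l.zipIdx.map (fun p => (p.1, decide (p.2 ∈ X)))

/-- `UL` : the words `w` such that `w[X] ∈ L` for arbitrarily large finite sets `X`. -/
def UL {α : Type} (L : Set (ℕ → α × Bool)) : Set (ℕ → α) :=
  { w | ∀ n : ℕ, ∃ X : Finset ℕ, n ≤ X.card ∧ withSet w X ∈ L }

/-- `max(q, l)` : maximal cardinality of a set `X` of positions of `l` such that `A`
reaches state `q` after reading `l[X]` (and `0` if there is no such set). -/
noncomputable def maxReach {α : Type} (A : MaxAutomaton (α × Bool)) (q : A.Q)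
    (l : List α) : ℕ :=
  sSup { k | ∃ X : Finset ℕ, (∀ x ∈ X, x < l.length) ∧ X.card = k ∧
    (A.readConfig (encodeList l X)).1 = q }

def suffixFrom {α : Type} (w : ℕ → α) (n : ℕ) : ℕ → α := fun k => w (n + k)

def prefixList {α : Type} (w : ℕ → α) (n : ℕ) : List α := (List.range n).map w

/-! ### WMSO+U and MSO+U formulas -/

inductive Formula (α : Type) where
  | letter (a : α) (x : ℕ)
  | mem (x X : ℕ)
  | le (x y : ℕ)
  | not (φ : Formula α)
  | and (φ ψ : Formula α)
  | exFO (x : ℕ) (φ : Formula α)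
  | exSO (X : ℕ) (φ : Formula α)
  | U (X : ℕ) (φ : Formula α)

/-- Weak semantics: set variables range over finite sets of positions. -/
def Sat {α : Type} (w : ℕ → α) (v1 : ℕ → ℕ) (v2 : ℕ → Finset ℕ) :
    Formula α → Prop
  | .letter a x => w (v1 x) = a
  | .mem x X => v1 x ∈ v2 X
  | .le x y => v1 x ≤ v1 y
  | .not φ => ¬ Sat w v1 v2 φ
  | .and φ ψ => Sat w v1 v2 φ ∧ Sat w v1 v2 ψ
  | .exFO x φ => ∃ k : ℕ, Sat w (Function.update v1 x k) v2 φ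
  | .exSO X φ => ∃ S : Finset ℕ, Sat w v1 (Function.update v2 X S) φ
  | .U X φ => ∀ n : ℕ, ∃ S : Finset ℕ, n ≤ S.card ∧
      Sat w v1 (Function.update v2 X S) φ

/-- Full semantics: set variables range over arbitrary subsets of ℕ; the
unbounding quantifier still speaks about finite sets. -/
def SatFull {α : Type} (w : ℕ → α) (v1 : ℕ → ℕ) (v2 : ℕ → Set ℕ) :
    Formula α → Prop
  | .letter a x => w (v1 x) = a
  | .mem x X => v1 x ∈ v2 X
  | .le x y => v1 x ≤ v1 y
  | .not φ => ¬ SatFull w v1 v2 φ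
  | .and φ ψ => SatFull w v1 v2 φ ∧ SatFull w v1 v2 ψ
  | .exFO x φ => ∃ k : ℕ, SatFull w (Function.update v1 x k) v2 φ
  | .exSO X φ => ∃ S : Set ℕ, SatFull w v1 (Function.update v2 X S) φ
  | .U X φ => ∀ n : ℕ, ∃ S : Finset ℕ, n ≤ S.card ∧
      SatFull w v1 (Function.update v2 X (↑S : Set ℕ)) φ

def freeFO {α : Type} : Formula α → Finset ℕ
  | .letter _ x => {x}
  | .mem x _ => {x}
  | .le x y => {x, y}
  | .not φ => freeFO φ
  | .and φ ψ => freeFO φ ∪ freeFO ψ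
  | .exFO x φ => freeFO φ \ {x}
  | .exSO _ φ => freeFO φ
  | .U _ φ => freeFO φ

def freeSO {α : Type} : Formula α → Finset ℕ
  | .letter _ _ => ∅
  | .mem _ X => {X}
  | .le _ _ => ∅
  | .not φ => freeSO φ
  | .and φ ψ => freeSO φ ∪ freeSO ψ
  | .exFO _ φ => freeSO φ
  | .exSO X φ => freeSO φ \ {X}
  | .U X φ => freeSO φ \ {X}

def Sentence {α : Type} (φ : Formula α) : Prop :=
  freeFO φ = ∅ ∧ freeSO φ = ∅

/-- `L` is definable by a sentence of WMSO+U. -/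
def DefinableW {α : Type} (L : Set (ℕ → α)) : Prop :=
  ∃ φ : Formula α, Sentence φ ∧
    L = { w | Sat w (fun _ => 0) (fun _ => (∅ : Finset ℕ)) φ }

/-- `L` is definable by a sentence of full MSO+U. -/
def DefinableF {α : Type} (L : Set (ℕ → α)) : Prop :=
  ∃ φ : Formula α, Sentence φ ∧
    L = { w | SatFull w (fun _ => 0) (fun _ => (∅ : Set ℕ)) φ }

/-- `φ` contains no occurrence of the unbounding quantifier. -/
def UFree {α : Type} : Formula α → Prop
  | .letter _ _ => True
  | .mem _ _ => True
  | .le _ _ => True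
  | .not φ => UFree φ
  | .and φ ψ => UFree φ ∧ UFree ψ
  | .exFO _ φ => UFree φ
  | .exSO _ φ => UFree φ
  | .U _ _ => False

/-- Boolean combinations of formulas `U X. φ` with `φ` free of the unbounding
quantifier. -/
inductive IsUNormal {α : Type} : Formula α → Prop
  | base (X : ℕ) (φ : Formula α) : UFree φ → IsUNormal (.U X φ)
  | not {φ : Formula α} : IsUNormal φ → IsUNormal (.not φ)
  | and {φ ψ : Formula α} : IsUNormal φ → IsUNormal ψ →
      IsUNormal (.and φ ψ)

/-! ### Deterministic Muller automata -/

structure MullerAutomaton (α : Type) where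
  Q : Type
  [finQ : Fintype Q]
  init : Q
  δ : Q → α → Q
  F : Set (Set Q)

attribute [instance] MullerAutomaton.finQ

namespace MullerAutomaton

variable {α : Type} (M : MullerAutomaton α)

def run (w : ℕ → α) : ℕ → M.Q
  | 0 => M.init
  | n + 1 => M.δ (run w n) (w n)

/-- States occurring infinitely often in the run on `w`. -/
def InfOcc (w : ℕ → α) : Set M.Q :=
  { q | ∀ n : ℕ, ∃ m, n ≤ m ∧ M.run w m = q }

def Lang : Set (ℕ → α) := { w | M.InfOcc w ∈ M.F }

end MullerAutomaton

/-! ### Partial runs, convergence, spanning sets -/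

section PartialRuns

variable {Q α : Type}

/-- State at position `n + k` of the run seeded at configuration `(q, n)`. -/
def runSeed (δ : Q → α → Q) (w : ℕ → α) (q : Q) (n : ℕ) : ℕ → Q
  | 0 => q
  | k + 1 => δ (runSeed δ w q n k) (w (n + k))

/-- The partial run seeded at configuration `(q, n)`. -/
def seeded (δ : Q → α → Q) (w : ℕ → α) (q : Q) (n : ℕ) : ℕ → Option Q :=
  fun m => if _h : n ≤ m then some (runSeed δ w q n (m - n)) else none

/-- A partial run over `w`: either the nowhere-defined run or a seeded run. -/
def IsPartialRun (δ : Q → α → Q) (w : ℕ → α) (ρ : ℕ → Option Q) : Prop :=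
  ρ = (fun _ => none) ∨ ∃ q n, ρ = seeded δ w q n

/-- Two partial runs converge if they agree from some position on. -/
def Converge (ρ₁ ρ₂ : ℕ → Option Q) : Prop :=
  ∃ N : ℕ, ∀ m, N ≤ m → ρ₁ m = ρ₂ m

/-- A set of partial runs spans `w` if every partial run over `w` converges with
some member of the set. -/
def Spans (δ : Q → α → Q) (w : ℕ → α) (S : Set (ℕ → Option Q)) : Prop :=
  ∀ ρ, IsPartialRun δ w ρ → ∃ ρ' ∈ S, Converge ρ ρ'

end PartialRuns

/-! ### Deterministic letter-to-letter transducers -/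

structure Transducer (α β : Type) where
  Q : Type
  [finQ : Fintype Q]
  init : Q
  δ : Q → α → Q
  out : Q → α → β

attribute [instance] Transducer.finQ

namespace Transducer

variable {α β : Type} (T : Transducer α β)

def run (w : ℕ → α) : ℕ → T.Q
  | 0 => T.init
  | n + 1 => T.δ (run w n) (w n)

/-- The function `Σ^ω → Γ^ω` computed by the transducer. -/
def f (w : ℕ → α) : ℕ → β := fun n => T.out (T.run w n) (w n)

end Transducer

open Classical in
/-- Decode a word over `Q × {0,1}` as a partial run: position `m` is defined (with the
state recorded at `m`) iff all markers from position `m` on are `1`. -/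
noncomputable def decode {Q : Type} (u : ℕ → Q × Bool) : ℕ → Option Q :=
  fun m => if (∀ j, m ≤ j → (u j).2 = true) then some (u m).1 else none

/-! ### Guarded max-automata -/

inductive GOp (C α : Type) where
  | inc (c : C)
  | reset (c : C)
  | output (c : C)
  | maxOp (c d : C)
  /-- `if G then output c` : output the value of `c` only if the suffix of the input
  beginning at the next position belongs to `G`. -/
  | goutput (G : Set (ℕ → α)) (c : C)

open Classical in
noncomputable def applyGOp {C α : Type} [DecidableEq C] (suffix : ℕ → α)
    (v : C → ℕ) : GOp C α → (C → ℕ) × Option (C × ℕ)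
  | .inc c => (Function.update v c (v c + 1), none)
  | .reset c => (Function.update v c 0, none)
  | .output c => (v, some (c, v c))
  | .maxOp c d => (Function.update v c (max (v c) (v d)), none)
  | .goutput G c => (v, if suffix ∈ G then some (c, v c) else none)

noncomputable def applyGOps {C α : Type} [DecidableEq C] (suffix : ℕ → α) :
    List (GOp C α) → (C → ℕ) → (C → ℕ) × List (C × ℕ)
  | [], v => (v, [])
  | op :: ops, v =>
      let p := applyGOp suffix v op
      let r := applyGOps suffix ops p.1
      (r.1, p.2.toList ++ r.2)

def GOp.WF {C α : Type} : GOp C α → Prop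
  | .goutput G _ => ∃ A : MaxAutomaton α, A.Lang = G
  | _ => True

structure GuardedMaxAutomaton (α : Type) where
  Q : Type
  C : Type
  [finQ : Fintype Q]
  [finC : Fintype C]
  [decC : DecidableEq C]
  init : Q
  δ : Q → α → Q × List (GOp C α)
  acc : BC C

attribute [instance] GuardedMaxAutomaton.finQ GuardedMaxAutomaton.finC
  GuardedMaxAutomaton.decC

namespace GuardedMaxAutomaton

variable {α : Type} (B : GuardedMaxAutomaton α)

/-- All guards used by the automaton are languages recognized by deterministic
max-automata. -/
def WF : Prop := ∀ q a, ∀ op ∈ (B.δ q a).2, op.WF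

def run (w : ℕ → α) : ℕ → B.Q
  | 0 => B.init
  | n + 1 => (B.δ (run w n) (w n)).1

noncomputable def vals (w : ℕ → α) : ℕ → (B.C → ℕ)
  | 0 => fun _ => 0
  | n + 1 =>
      (applyGOps (suffixFrom w (n + 1)) (B.δ (B.run w n) (w n)).2 (vals w n)).1

noncomputable def outs (w : ℕ → α) (n : ℕ) : List (B.C × ℕ) :=
  (applyGOps (suffixFrom w (n + 1)) (B.δ (B.run w n) (w n)).2 (B.vals w n)).2

def Bounded (w : ℕ → α) (c : B.C) : Prop :=
  ∃ Bd, ∀ n, ∀ p ∈ B.outs w n, p.1 = c → p.2 ≤ Bd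

def Accepts (w : ℕ → α) : Prop := B.acc.eval (B.Bounded w)

def Lang : Set (ℕ → α) := { w | B.Accepts w }

end GuardedMaxAutomaton

/-! ### Nondeterministic max-automata -/

structure NMaxAutomaton (α : Type) where
  Q : Type
  C : Type
  [finQ : Fintype Q]
  [finC : Fintype C]
  [decC : DecidableEq C]
  init : Q
  δ : Q → α → Set (Q × List (CounterOp C))
  acc : BC C

attribute [instance] NMaxAutomaton.finQ NMaxAutomaton.finC NMaxAutomaton.decC

/-- Counter values along a sequence of counter-operation lists. -/
def nvals {C : Type} [DecidableEq C] (ops : ℕ → List (CounterOp C)) :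
    ℕ → (C → ℕ)
  | 0 => fun _ => 0
  | n + 1 => (applyOps (ops n) (nvals ops n)).1

def nouts {C : Type} [DecidableEq C] (ops : ℕ → List (CounterOp C)) (n : ℕ) :
    List (C × ℕ) :=
  (applyOps (ops n) (nvals ops n)).2

namespace NMaxAutomaton

variable {α : Type} (A : NMaxAutomaton α)

def Accepts (w : ℕ → α) : Prop :=
  ∃ (q : ℕ → A.Q) (ops : ℕ → List (CounterOp A.C)),
    q 0 = A.init ∧
    (∀ n, (q (n + 1), ops n) ∈ A.δ (q n) (w n)) ∧
    A.acc.eval (fun c => ∃ B, ∀ n, ∀ p ∈ nouts ops n, p.1 = c → p.2 ≤ B)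

def Lang : Set (ℕ → α) := { w | A.Accepts w }

end NMaxAutomaton

/-! ### The separating language -/

/-- Position of the `k`-th letter `b` in `a^{ns 0} b a^{ns 1} b ⋯` (0-indexed). -/
def bpos (ns : ℕ → ℕ) (k : ℕ) : ℕ := (∑ i ∈ Finset.range (k + 1), ns i) + k

/-- `L_sep` over the alphabet `{a, b}` (with `a = false`, `b = true`): words
`a^{n₁} b a^{n₂} b ⋯` such that some number appears infinitely often in `n₁, n₂, …`. -/
def Lsep : Set (ℕ → Bool) :=
  { w | ∃ ns : ℕ → ℕ,
      (∀ m, w m = true ↔ ∃ k, bpos ns k = m) ∧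
      ∃ v, { i | ns i = v }.Infinite }

/-! ### Topological notions -/

/-- A `Σ₂` set: a countable union of closed sets. -/
def IsSigma2 {X : Type} [TopologicalSpace X] (S : Set X) : Prop :=
  ∃ F : ℕ → Set X, (∀ n, IsClosed (F n)) ∧ S = ⋃ n, F n

/-- Boolean combinations of `Σ₂` sets. -/
inductive IsBoolCombSigma2 {X : Type} [TopologicalSpace X] : Set X → Prop
  | base {S : Set X} : IsSigma2 S → IsBoolCombSigma2 S
  | compl {S : Set X} : IsBoolCombSigma2 S → IsBoolCombSigma2 Sᶜ
  | inter {S T : Set X} : IsBoolCombSigma2 S → IsBoolCombSigma2 T →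
      IsBoolCombSigma2 (S ∩ T)

/-!
A run of the one-state automaton `Nsep` guesses a set of `b`-positions. Counter `false` holds
the length of the current `a`-block and is output at each guessed `b`; counter `true` counts
the guessed `b`s. The run accepts iff infinitely many `b`s are guessed and the blocks they close
have bounded length; by pigeonhole this happens for some guess iff some block length recurs
infinitely often.
-/

theorem exists_infinite_inter_preimage_of_finite_image {α β : Type*} {S : Set α} {f : α → β}
    (hS : S.Infinite) (hf : (f '' S).Finite) : ∃ b, (S ∩ f ⁻¹' {b}).Infinite := by
  by_contra! h
  refine hS ((hf.biUnion fun b _ => h b).subset fun x hx => ?_)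
  exact Set.mem_biUnion (Set.mem_image_of_mem f hx) ⟨hx, rfl⟩

theorem exists_count_succ_le_iff_finite {p : ℕ → Prop} [DecidablePred p] :
    (∃ B, ∀ n, p n → Nat.count p (n + 1) ≤ B) ↔ {n | p n}.Finite := by
  refine ⟨fun ⟨B, hB⟩ => ?_, fun hf => ⟨hf.toFinset.card, fun n _ => Nat.count_le_card hf _⟩⟩
  by_contra hinf
  have hmem := Nat.nth_mem_of_infinite hinf B
  have := hB _ hmem
  rw [Nat.count_succ, if_pos hmem, Nat.count_nth_of_infinite hinf] at this
  omega

/-- The number of letters `a` (`false`) immediately before position `n`. -/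
def blockLen (w : ℕ → Bool) : ℕ → ℕ
  | 0 => 0
  | n + 1 => if w n then 0 else blockLen w n + 1

theorem blockLen_add {w : ℕ → Bool} {s len : ℕ} (h : ∀ j < len, w (s + j) = false) :
    blockLen w (s + len) = blockLen w s + len := by
  induction len with
  | zero => rfl
  | succ len ih =>
    rw [← Nat.add_assoc, blockLen, if_neg (by simp [h len (by omega)]),
      ih fun j hj => h j (by omega), Nat.add_assoc]

theorem bpos_succ (ns : ℕ → ℕ) (k : ℕ) : bpos ns (k + 1) = bpos ns k + ns (k + 1) + 1 := by
  simp only [bpos, Finset.sum_range_succ]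
  ring

theorem bpos_strictMono (ns : ℕ → ℕ) : StrictMono (bpos ns) :=
  strictMono_nat_of_lt_succ fun k => by rw [bpos_succ]; omega

theorem blockLen_bpos {w : ℕ → Bool} {ns : ℕ → ℕ} (hw : ∀ m, w m = true ↔ ∃ k, bpos ns k = m)
    (k : ℕ) : blockLen w (bpos ns k) = ns k := by
  have hmono := bpos_strictMono ns
  have hfalse : ∀ m, (∀ i, m ≠ bpos ns i) → w m = false := fun m hm => by
    by_contra h
    obtain ⟨i, rfl⟩ := (hw m).1 (Bool.not_eq_false _ ▸ h)
    exact hm i rfl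
  cases k with
  | zero =>
    have h := blockLen_add (w := w) (s := 0) (len := ns 0) fun j hj => hfalse _ fun i => by
      have := hmono.monotone (Nat.zero_le i)
      simp only [bpos, zero_add, Finset.sum_range_one] at this ⊢
      omega
    simpa [bpos, blockLen] using h
  | succ k =>
    have hb : w (bpos ns k) = true := (hw _).2 ⟨k, rfl⟩
    have hgap : ∀ j < ns (k + 1), w (bpos ns k + 1 + j) = false := fun j hj =>
      hfalse _ fun i hi => by
        have h1 := hmono.lt_iff_lt.1 (show bpos ns k < bpos ns i by omega)
        have h2 := hmono.lt_iff_lt.1 (show bpos ns i < bpos ns (k + 1) by rw [bpos_succ]; omega)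
        omega
    rw [show bpos ns (k + 1) = bpos ns k + 1 + ns (k + 1) by rw [bpos_succ]; omega,
      blockLen_add hgap, blockLen, if_pos hb, zero_add]

/-- For infinite `S`, `gaps S k` is the number of non-elements of `S` just before its `k`-th
element. -/
noncomputable def gaps (S : Set ℕ) : ℕ → ℕ
  | 0 => Nat.nth (· ∈ S) 0
  | k + 1 => Nat.nth (· ∈ S) (k + 1) - Nat.nth (· ∈ S) k - 1

theorem range_bpos_gaps {S : Set ℕ} (hS : S.Infinite) : Set.range (bpos (gaps S)) = S := by
  suffices bpos (gaps S) = Nat.nth (· ∈ S) from this ▸ Nat.range_nth_of_infinite hS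
  funext k
  induction k with
  | zero => simp [bpos, gaps]
  | succ k ih =>
    have := Nat.nth_strictMono (p := (· ∈ S)) hS (Nat.lt_add_one k)
    rw [bpos_succ, ih, gaps]
    omega

theorem mem_Lsep_iff (w : ℕ → Bool) :
    w ∈ Lsep ↔ ∃ v, {n | w n = true ∧ blockLen w n = v}.Infinite := by
  constructor
  · rintro ⟨ns, hw, v, hv⟩
    refine ⟨v, (hv.image (bpos_strictMono ns).injective.injOn).mono ?_⟩
    rintro _ ⟨k, hk, rfl⟩
    exact ⟨(hw _).2 ⟨k, rfl⟩, (blockLen_bpos hw k).trans hk⟩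
  · rintro ⟨v, hv⟩
    have hb : {n | w n = true}.Infinite := hv.mono fun n hn => hn.1
    have hw : ∀ m, w m = true ↔ ∃ k, bpos (gaps _) k = m := fun m => by
      rw [← Set.mem_range, range_bpos_gaps hb, Set.mem_ofPred_eq]
    refine ⟨_, hw, v, Set.Infinite.of_image (bpos (gaps {n | w n = true})) (hv.mono ?_)⟩
    rintro n ⟨hn, hnv⟩
    obtain ⟨k, rfl⟩ := (hw n).1 hn
    exact ⟨k, (blockLen_bpos hw k).symm.trans hnv, rfl⟩

def letterOps (a g : Bool) : List (CounterOp Bool) :=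
  if a then (if g then [.output false, .reset false, .inc true, .output true] else [.reset false])
  else [.inc false]

def Nsep : NMaxAutomaton Bool where
  Q := Unit
  C := Bool
  init := ()
  δ := fun _ a => {t | ∃ g, t = ((), letterOps a g)}
  acc := .an (.atom false) (.nt (.atom true))

theorem Nsep_accepts_iff_exists_guess (w : ℕ → Bool) :
    Nsep.Accepts w ↔ ∃ sel : ℕ → Bool, Nsep.acc.eval
      (fun c => ∃ B, ∀ n, ∀ p ∈ nouts (fun n => letterOps (w n) (sel n)) n, p.1 = c → p.2 ≤ B) := by
  constructor
  · rintro ⟨q, ops, -, hδ, hacc⟩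
    choose sel hsel using hδ
    obtain rfl : ops = fun n => letterOps (w n) (sel n) :=
      funext fun n => congrArg Prod.snd (hsel n)
    exact ⟨sel, hacc⟩
  · rintro ⟨sel, hacc⟩
    exact ⟨fun _ => (), _, rfl, fun n => ⟨sel n, rfl⟩, hacc⟩

theorem nvals_letterOps (w sel : ℕ → Bool) (n : ℕ) :
    nvals (fun n => letterOps (w n) (sel n)) n false = blockLen w n ∧
      nvals (fun n => letterOps (w n) (sel n)) n true =
        Nat.count (fun i => w i = true ∧ sel i = true) n := by
  induction n with
  | zero => simp [nvals, blockLen]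
  | succ n ih =>
    obtain ⟨ha, hb⟩ := ih
    rw [nvals]
    generalize nvals (fun n => letterOps (w n) (sel n)) n = v at ha hb ⊢
    cases hw : w n <;> cases hs : sel n <;>
      simp [letterOps, applyOps, applyOp, Function.update, blockLen, Nat.count_succ, hw, hs, ha, hb]

theorem nouts_letterOps (w sel : ℕ → Bool) (n : ℕ) :
    nouts (fun n => letterOps (w n) (sel n)) n =
      if w n = true ∧ sel n = true then
        [(false, blockLen w n), (true, Nat.count (fun i => w i = true ∧ sel i = true) (n + 1))]
      else [] := by
  obtain ⟨ha, hb⟩ := nvals_letterOps w sel n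
  rw [nouts]
  generalize nvals (fun n => letterOps (w n) (sel n)) n = v at ha hb ⊢
  cases hw : w n <;> cases hs : sel n <;>
    simp [letterOps, applyOps, applyOp, Nat.count_succ, hw, hs, ha, hb]

theorem Nsep_accepts_iff (w : ℕ → Bool) :
    Nsep.Accepts w ↔ ∃ sel : ℕ → Bool,
      (∃ B, ∀ n, w n = true ∧ sel n = true → blockLen w n ≤ B) ∧
        {n | w n = true ∧ sel n = true}.Infinite := by
  rw [Nsep_accepts_iff_exists_guess]
  refine exists_congr fun sel => and_congr ?_ (not_congr ?_)
  · refine exists_congr fun B => forall_congr' fun n => ?_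
    rw [nouts_letterOps]
    split_ifs with h <;> simp [h]
  · rw [← exists_count_succ_le_iff_finite]
    refine exists_congr fun B => forall_congr' fun n => ?_
    rw [nouts_letterOps]
    split_ifs with h <;> simp [h]

theorem exists_bounded_selection_iff (w : ℕ → Bool) :
    (∃ sel : ℕ → Bool, (∃ B, ∀ n, w n = true ∧ sel n = true → blockLen w n ≤ B) ∧
        {n | w n = true ∧ sel n = true}.Infinite) ↔
      ∃ v, {n | w n = true ∧ blockLen w n = v}.Infinite := by
  constructor
  · rintro ⟨sel, ⟨B, hB⟩, hinf⟩
    obtain ⟨v, hv⟩ := exists_infinite_inter_preimage_of_finite_image (f := blockLen w) hinf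
      ((Set.finite_Iic B).subset (by rintro _ ⟨n, hn, rfl⟩; exact hB n hn))
    exact ⟨v, hv.mono fun n hn => ⟨hn.1.1, hn.2⟩⟩
  · rintro ⟨v, hv⟩
    exact ⟨fun n => decide (blockLen w n = v), ⟨v, fun n hn => (of_decide_eq_true hn.2).le⟩,
      hv.mono fun n hn => ⟨hn.1, decide_eq_true hn.2⟩⟩

/-- The language `L_sep` is recognized by a nondeterministic
max-automaton. -/
theorem Lsep_nondeterministic :
    ∃ N : NMaxAutomaton Bool, N.Lang = Lsep :=
  ⟨Nsep, Set.ext fun w =>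
    (Nsep_accepts_iff w).trans ((exists_bounded_selection_iff w).trans (mem_Lsep_iff w).symm)⟩

end MaxReg
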